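/- arXiv:1407.4666 — 3 statements merged into one kernel-verified Lean document; each statement's English description precedes it below -/
import Mathlib

section
/- Let n ≥ 1 and let S be a Sperner family on {1,…,n} with module h_S. Then the derivative of the polynomial h_S satisfies h_S′(0) = |⋂_{A ∈ S} A| and h_S′(1) = #{A ∈ S : |A| = 1}. Moreover, if S does not consist of just one singleton, then h_S′(0) · h_S′(1) = 0. -/
open MeasureTheory

/-- The Sperner statistic of a family `S` of subsets of `{1,…,n}`:
`H_S(x) = max_{A ∈ S} min_{i ∈ A} x_i`. -/
noncomputable def spernerStat {n : ℕ} (S : Finset (Finset (Fin n))) (hS : S.Nonempty)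
    (hne : ∀ A ∈ S, A.Nonempty) (x : Fin n → ℝ) : ℝ :=
  S.attach.sup' (Finset.attach_nonempty_iff.mpr hS)
    (fun A => A.1.inf' (hne A.1 A.2) x)

/- The module of a Sperner family:
`h_S(t) = Σ_{ε ∈ {0,1}^n, H_S(ε)=0} t^{z(ε)} (1−t)^{n−z(ε)}`, where `z(ε)` is the
number of zero coordinates of `ε`. -/
open scoped Classical in
noncomputable def spernerModule {n : ℕ} (S : Finset (Finset (Fin n))) (hS : S.Nonempty)
    (hne : ∀ A ∈ S, A.Nonempty) (t : ℝ) : ℝ :=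
  ∑ ε : Fin n → Bool,
    if spernerStat S hS hne (fun i => if ε i then 1 else 0) = 0 then
      t ^ (Finset.univ.filter fun i => ε i = false).card *
        (1 - t) ^ (n - (Finset.univ.filter fun i => ε i = false).card)
    else 0

/-!
Write `ε` as the indicator of the complement of its zero set `Z`. Then `H_S(ε) = 0` exactly when
`Z` meets every member of `S`, so `h_S(t) = ∑ t ^ |Z| (1 - t) ^ |Zᶜ|` over the transversals `Z`
of `S`. At `t = 0` only the one-point transversals `{i}`, i.e. `i ∈ ⋂ S`, contribute to the
derivative, each with `1`. At `t = 1` the full set contributes `n` and each transversal `{i}ᶜ`,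
i.e. each `i` with `{i} ∉ S`, contributes `-1`. Finally, if `i ∈ ⋂ S` and `{j} ∈ S`, then `i = j`
and `{j}` lies below every member of `S`, so the Sperner property forces `S = {{j}}`.
-/

open Finset

lemma hasDerivAt_pow_mul_one_sub_pow (a b : ℕ) (t : ℝ) :
    HasDerivAt (fun t : ℝ => t ^ a * (1 - t) ^ b)
      (a * t ^ (a - 1) * (1 - t) ^ b - b * t ^ a * (1 - t) ^ (b - 1)) t := by
  refine ((hasDerivAt_pow a t).fun_mul (((hasDerivAt_id' t).const_sub 1).fun_pow b)).congr_deriv ?_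
  ring

lemma deriv_pow_mul_one_sub_pow_zero {a : ℕ} (ha : a ≠ 0) (b : ℕ) :
    deriv (fun t : ℝ => t ^ a * (1 - t) ^ b) 0 = if a = 1 then 1 else 0 := by
  rw [(hasDerivAt_pow_mul_one_sub_pow a b 0).deriv]
  rcases eq_or_ne a 1 with rfl | ha1
  · simp
  · simp [ha, ha1, zero_pow_eq_zero.mpr (show a - 1 ≠ 0 by omega)]

lemma deriv_pow_mul_one_sub_pow_one (a b : ℕ) :
    deriv (fun t : ℝ => t ^ a * (1 - t) ^ b) 1 =
      (if b = 0 then (a : ℝ) else 0) - if b = 1 then 1 else 0 := by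
  rw [(hasDerivAt_pow_mul_one_sub_pow a b 1).deriv]
  rcases Nat.lt_trichotomy b 1 with hb | rfl | hb
  · obtain rfl : b = 0 := by omega
    simp
  · simp
  · simp [show b ≠ 0 by omega, show b ≠ 1 by omega, show b - 1 ≠ 0 by omega]

lemma deriv_sum_pow_mul_one_sub_pow {ι : Type*} (s : Finset ι) (a b : ι → ℕ) (x : ℝ) :
    deriv (fun t : ℝ => ∑ i ∈ s, t ^ a i * (1 - t) ^ b i) x =
      ∑ i ∈ s, deriv (fun t : ℝ => t ^ a i * (1 - t) ^ b i) x :=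
  deriv_fun_sum fun i _ => (hasDerivAt_pow_mul_one_sub_pow (a i) (b i) x).differentiableAt

section SpernerStat

variable {n : ℕ} (S : Finset (Finset (Fin n))) (hS : S.Nonempty) (hne : ∀ A ∈ S, A.Nonempty)

lemma spernerStat_nonpos_iff {x : Fin n → ℝ} :
    spernerStat S hS hne x ≤ 0 ↔ ∀ A ∈ S, ∃ i ∈ A, x i ≤ 0 := by
  simp [spernerStat, sup'_le_iff, inf'_le_iff]

lemma spernerStat_nonneg {x : Fin n → ℝ} (hx : ∀ i, 0 ≤ x i) : 0 ≤ spernerStat S hS hne x := by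
  obtain ⟨A, hA⟩ := hS
  exact (le_inf' _ _ fun i _ => hx i).trans
    (le_sup' (fun B : S => B.1.inf' (hne B.1 B.2) x) (mem_attach S ⟨A, hA⟩))

lemma spernerStat_eq_zero_iff {x : Fin n → ℝ} (hx : ∀ i, 0 ≤ x i) :
    spernerStat S hS hne x = 0 ↔ ∀ A ∈ S, ∃ i ∈ A, x i = 0 := by
  rw [le_antisymm_iff, spernerStat_nonpos_iff]
  simp only [spernerStat_nonneg S hS hne hx, and_true]
  exact forall₂_congr fun A _ => exists_congr fun i => and_congr_right' (hx i).ge_iff_eq'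

end SpernerStat

section Transversals

variable {α : Type*} [Fintype α] [DecidableEq α]

def transversals (S : Finset (Finset α)) : Finset (Finset α) :=
  univ.filter fun Z => ∀ A ∈ S, ¬Disjoint A Z

variable {S : Finset (Finset α)}

lemma mem_transversals {Z : Finset α} : Z ∈ transversals S ↔ ∀ A ∈ S, ¬Disjoint A Z := by
  simp [transversals]

lemma nonempty_of_mem_transversals (hS : S.Nonempty) {Z : Finset α}
    (hZ : Z ∈ transversals S) : Z.Nonempty := by
  obtain ⟨A, hA⟩ := hS
  obtain ⟨i, -, hi⟩ := not_disjoint_iff.mp (mem_transversals.mp hZ A hA)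
  exact ⟨i, hi⟩

lemma univ_mem_transversals (hne : ∀ A ∈ S, A.Nonempty) : univ ∈ transversals S :=
  mem_transversals.mpr fun A hA =>
    let ⟨i, hi⟩ := hne A hA
    not_disjoint_iff.mpr ⟨i, hi, mem_univ i⟩

lemma singleton_mem_transversals_iff {i : α} :
    {i} ∈ transversals S ↔ ∀ A ∈ S, i ∈ A := by
  simp [mem_transversals, disjoint_singleton_right]

lemma compl_singleton_mem_transversals_iff (hne : ∀ A ∈ S, A.Nonempty) {i : α} :
    {i}ᶜ ∈ transversals S ↔ {i} ∉ S := by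
  simp only [mem_transversals, disjoint_compl_right_iff]
  constructor
  · exact fun h hi => h _ hi subset_rfl
  · rintro hi A hA hAi
    obtain rfl := (subset_singleton_iff.mp hAi).resolve_left (hne A hA).ne_empty
    exact hi hA

lemma filter_card_eq_one_transversals (hS : S.Nonempty) :
    (transversals S).filter (#· = 1) = (S.inf' hS id).map ⟨singleton, singleton_injective⟩ := by
  ext Z
  simp only [mem_filter, card_eq_one, mem_map, Function.Embedding.coeFn_mk, mem_inf', id_eq]
  constructor
  · rintro ⟨hZ, i, rfl⟩
    exact ⟨i, singleton_mem_transversals_iff.mp hZ, rfl⟩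
  · rintro ⟨i, hi, rfl⟩
    exact ⟨singleton_mem_transversals_iff.mpr hi, i, rfl⟩

lemma filter_card_compl_eq_zero_transversals (hne : ∀ A ∈ S, A.Nonempty) :
    (transversals S).filter (#·ᶜ = 0) = {univ} := by
  ext Z
  simp only [mem_filter, card_eq_zero, compl_eq_empty_iff, mem_singleton]
  exact ⟨And.right, fun h => ⟨h ▸ univ_mem_transversals hne, h⟩⟩

lemma filter_card_compl_eq_one_transversals (hne : ∀ A ∈ S, A.Nonempty) :
    (transversals S).filter (#·ᶜ = 1) =
      (univ.filter fun i => {i} ∉ S).map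
        ⟨fun i => ({i} : Finset α)ᶜ, compl_injective.comp singleton_injective⟩ := by
  ext Z
  simp only [mem_filter, card_eq_one, mem_map, mem_univ, true_and, Function.Embedding.coeFn_mk]
  constructor
  · rintro ⟨hZ, i, hi⟩
    rw [← compl_compl Z, hi] at hZ
    exact ⟨i, (compl_singleton_mem_transversals_iff hne).mp hZ, by rw [← hi, compl_compl]⟩
  · rintro ⟨i, hi, rfl⟩
    exact ⟨(compl_singleton_mem_transversals_iff hne).mpr hi, i, compl_compl _⟩

lemma filter_card_eq_one_eq_map_singleton :
    S.filter (#· = 1) = (univ.filter fun i => {i} ∈ S).map ⟨singleton, singleton_injective⟩ := by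
  ext A
  simp only [mem_filter, card_eq_one, mem_map, mem_univ, true_and, Function.Embedding.coeFn_mk]
  constructor
  · rintro ⟨hA, i, rfl⟩
    exact ⟨i, hA, rfl⟩
  · rintro ⟨i, hi, rfl⟩
    exact ⟨hi, i, rfl⟩

lemma card_filter_transversals_add_card_singletons (hne : ∀ A ∈ S, A.Nonempty) :
    #((transversals S).filter (#·ᶜ = 1)) + #(S.filter (#· = 1)) = Fintype.card α := by
  rw [filter_card_compl_eq_one_transversals hne, filter_card_eq_one_eq_map_singleton, card_map,
    card_map, add_comm, card_filter_add_card_filter_not, card_univ]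

end Transversals

section SpernerModule

variable {n : ℕ} (S : Finset (Finset (Fin n))) (hS : S.Nonempty) (hne : ∀ A ∈ S, A.Nonempty)

lemma spernerModule_eq_sum_transversals :
    spernerModule S hS hne = fun t => ∑ Z ∈ transversals S, t ^ #Z * (1 - t) ^ #Zᶜ := by
  funext t
  rw [spernerModule, transversals, sum_filter]
  refine sum_nbij' (fun ε => univ.filter (ε · = false)) (fun Z i => decide (i ∉ Z))
    (by simp) (by simp) (fun ε _ => ?_) (fun Z _ => ?_) (fun ε _ => ?_)
  · funext i
    cases h : ε i <;> simp [h]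
  · ext i
    simp
  · have hx : ∀ i, (0 : ℝ) ≤ if ε i then 1 else 0 := fun i => by split_ifs <;> norm_num
    rw [card_compl, Fintype.card_fin]
    simp [spernerStat_eq_zero_iff S hS hne hx, not_disjoint_iff]

lemma deriv_spernerModule_zero : deriv (spernerModule S hS hne) 0 = #(S.inf' hS id) := by
  rw [spernerModule_eq_sum_transversals, deriv_sum_pow_mul_one_sub_pow,
    sum_congr rfl fun Z hZ => deriv_pow_mul_one_sub_pow_zero
      (nonempty_of_mem_transversals hS hZ).card_ne_zero _,
    sum_boole, filter_card_eq_one_transversals hS, card_map]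

lemma deriv_spernerModule_one : deriv (spernerModule S hS hne) 1 = #(S.filter (#· = 1)) := by
  rw [spernerModule_eq_sum_transversals, deriv_sum_pow_mul_one_sub_pow]
  simp only [deriv_pow_mul_one_sub_pow_one]
  rw [sum_sub_distrib, ← sum_filter, filter_card_compl_eq_zero_transversals hne, sum_singleton,
    sum_boole, card_univ, Fintype.card_fin, sub_eq_iff_eq_add', ← Nat.cast_add,
    card_filter_transversals_add_card_singletons hne, Fintype.card_fin]

end SpernerModule

lemma eq_singleton_of_mem_inf'_of_singleton_mem {α : Type*} [DecidableEq α]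
    {S : Finset (Finset α)} (hS : S.Nonempty) (hsp : ∀ A ∈ S, ∀ B ∈ S, A ⊆ B → A = B) {i j : α}
    (hi : i ∈ S.inf' hS id) (hj : {j} ∈ S) : S = {{j}} := by
  rw [mem_inf'] at hi
  obtain rfl : i = j := mem_singleton.mp (hi _ hj)
  exact eq_singleton_iff_unique_mem.mpr
    ⟨hj, fun B hB => (hsp _ hj B hB (singleton_subset_iff.mpr (hi B hB))).symm⟩

theorem sperner_module_derivatives_at_endpoints_general
    (n : ℕ) (S : Finset (Finset (Fin n))) (hS : S.Nonempty)
    (hne : ∀ A ∈ S, A.Nonempty) (hsp : ∀ A ∈ S, ∀ B ∈ S, A ⊆ B → A = B) :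
    deriv (spernerModule S hS hne) 0 = ((S.inf' hS id).card : ℝ) ∧
    deriv (spernerModule S hS hne) 1 = ((S.filter fun A => A.card = 1).card : ℝ) ∧
    ((¬ ∃ i : Fin n, S = {({i} : Finset (Fin n))}) →
      deriv (spernerModule S hS hne) 0 * deriv (spernerModule S hS hne) 1 = 0) := by
  refine ⟨deriv_spernerModule_zero S hS hne, deriv_spernerModule_one S hS hne, fun hS1 => ?_⟩
  rw [deriv_spernerModule_zero, deriv_spernerModule_one, mul_eq_zero, Nat.cast_eq_zero,
    Nat.cast_eq_zero, card_eq_zero, card_eq_zero]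
  contrapose! hS1
  obtain ⟨⟨i, hi⟩, ⟨A, hA⟩⟩ := hS1
  obtain ⟨hAS, j, rfl⟩ : _ ∧ ∃ j, A = {j} := by simpa only [mem_filter, card_eq_one] using hA
  exact ⟨j, eq_singleton_of_mem_inf'_of_singleton_mem hS hsp hi hAS⟩

/-- Derivatives of the module of a Sperner family at `0` and `1`:
`h_S′(0) = |⋂_{A ∈ S} A|`, `h_S′(1) = #{A ∈ S : |A| = 1}`, and if `S` does not consist
of just one singleton then `h_S′(0) · h_S′(1) = 0`. -/
theorem sperner_module_derivatives_at_endpoints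
    (n : ℕ) (hn : 1 ≤ n) (S : Finset (Finset (Fin n))) (hS : S.Nonempty)
    (hne : ∀ A ∈ S, A.Nonempty) (hsp : ∀ A ∈ S, ∀ B ∈ S, A ⊆ B → A = B) :
    deriv (spernerModule S hS hne) 0 = ((S.inf' hS id).card : ℝ) ∧
    deriv (spernerModule S hS hne) 1 = ((S.filter fun A => A.card = 1).card : ℝ) ∧
    ((¬ ∃ i : Fin n, S = {({i} : Finset (Fin n))}) →
      deriv (spernerModule S hS hne) 0 * deriv (spernerModule S hS hne) 1 = 0) :=
  sperner_module_derivatives_at_endpoints_general n S hS hne hsp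
end

section
/- Let n ≥ 1 and let S be a Sperner family on {1,…,n} with module h_S. Then h_S(t) = t for all t ∈ [0,1] if and only if S consists of exactly one set, which is a singleton (in which case H_S is a coordinate projection). -/
open MeasureTheory

/-!
Read `h_S(t)` as the probability that the zero set of a random `ε ∈ {0,1}^n`, whose coordinates
vanish independently with probability `t`, meets every member of `S`. For `S = {{i}}` this is
`P(ε_i = 0) = t`. Conversely, the union bound `1 - h_S(t) ≤ ∑_{A ∈ S} (1 - t)^|A|` is
`o(1 - t)` as `t → 1` unless `S` contains a singleton `{i}`; any other `B ∈ S` then misses `i`,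
so the zero set `Bᶜ` contains `i` without meeting `B`, and `h_S(t) < P(ε_i = 0) = t`.
-/

open Finset

section BernoulliWeight

variable {ι : Type*} [Fintype ι]

/-- The probability of `ε` when each coordinate is independently `false` (a zero) with
probability `t`. -/
noncomputable def bernoulliWeight (t : ℝ) (ε : ι → Bool) : ℝ :=
  ∏ i, if ε i then 1 - t else t

lemma bernoulliWeight_nonneg {t : ℝ} (ht : t ∈ Set.Icc (0 : ℝ) 1) (ε : ι → Bool) :
    0 ≤ bernoulliWeight t ε :=
  prod_nonneg fun i _ => by split <;> linarith [ht.1, ht.2]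

lemma bernoulliWeight_pos {t : ℝ} (ht : t ∈ Set.Ioo (0 : ℝ) 1) (ε : ι → Bool) :
    0 < bernoulliWeight t ε :=
  prod_pos fun i _ => by split <;> linarith [ht.1, ht.2]

lemma bernoulliWeight_eq_pow_mul_pow (t : ℝ) (ε : ι → Bool) :
    bernoulliWeight t ε =
      t ^ #{i | ε i = false} * (1 - t) ^ (Fintype.card ι - #{i | ε i = false}) := by
  have hcard := card_filter_add_card_filter_not (s := univ) fun i => ε i = false
  simp only [Bool.not_eq_false, card_univ] at hcard
  rw [bernoulliWeight, prod_ite, prod_const, prod_const, mul_comm, ← hcard,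
    Nat.add_sub_cancel_left]
  simp only [Bool.not_eq_true]

lemma sum_bernoulliWeight_const_on [DecidableEq ι] (t : ℝ) (A : Finset ι) (b : Bool) :
    ∑ ε with ∀ i ∈ A, ε i = b, bernoulliWeight t ε = (if b then 1 - t else t) ^ #A := by
  set C : ι → Finset Bool := fun i => if i ∈ A then {b} else univ
  have hC : ({ε | ∀ i ∈ A, ε i = b} : Finset (ι → Bool)) = Fintype.piFinset C := by
    ext ε
    simp only [mem_filter, mem_univ, true_and, Fintype.mem_piFinset]
    refine forall_congr' fun i => ?_
    by_cases hi : i ∈ A <;> simp [C, hi]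
  calc ∑ ε with ∀ i ∈ A, ε i = b, bernoulliWeight t ε
      = ∏ i, ∑ c ∈ C i, if c then 1 - t else t := by
        rw [hC]
        exact (prod_univ_sum C fun _ (c : Bool) => if c then 1 - t else t).symm
    _ = ∏ i, if i ∈ A then (if b then 1 - t else t) else 1 :=
        prod_congr rfl fun i _ => by split <;> simp [C, *]
    _ = (if b then 1 - t else t) ^ #A := by rw [prod_ite_mem, univ_inter, prod_const]

lemma sum_bernoulliWeight [DecidableEq ι] (t : ℝ) : ∑ ε : ι → Bool, bernoulliWeight t ε = 1 := by
  simpa using sum_bernoulliWeight_const_on t (∅ : Finset ι) true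

lemma sum_bernoulliWeight_eq_false [DecidableEq ι] (t : ℝ) (i : ι) :
    ∑ ε with ε i = false, bernoulliWeight t ε = t := by
  simpa using sum_bernoulliWeight_const_on t {i} false

end BernoulliWeight

section SpernerStat

variable {n : ℕ} {S : Finset (Finset (Fin n))} {hS : S.Nonempty} {hne : ∀ A ∈ S, A.Nonempty}

lemma spernerStat_le_iff (x : Fin n → ℝ) (c : ℝ) :
    spernerStat S hS hne x ≤ c ↔ ∀ A ∈ S, ∃ i ∈ A, x i ≤ c := by
  simp [spernerStat, inf'_le_iff]

lemma le_spernerStat_iff (x : Fin n → ℝ) (c : ℝ) :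
    c ≤ spernerStat S hS hne x ↔ ∃ A ∈ S, ∀ i ∈ A, c ≤ x i := by
  simp [spernerStat, le_sup'_iff, le_inf'_iff]

lemma spernerStat_indicator_eq_zero_iff (ε : Fin n → Bool) :
    spernerStat S hS hne (fun i => if ε i then 1 else 0) = 0 ↔
      ∀ A ∈ S, ∃ i ∈ A, ε i = false := by
  have hnonneg : 0 ≤ spernerStat S hS hne (fun i => if ε i then 1 else 0) := by
    obtain ⟨A, hA⟩ := hS
    exact (le_spernerStat_iff _ _).2 ⟨A, hA, fun i _ => by split <;> norm_num⟩
  rw [← hnonneg.ge_iff_eq', spernerStat_le_iff]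
  refine forall₂_congr fun A _ => exists_congr fun i => and_congr_right fun _ => ?_
  cases ε i <;> norm_num

lemma spernerModule_eq_sum_bernoulliWeight (t : ℝ) :
    spernerModule S hS hne t =
      ∑ ε with ∀ A ∈ S, ∃ i ∈ A, ε i = false, bernoulliWeight t ε := by
  classical
  rw [spernerModule, sum_filter]
  refine sum_congr rfl fun ε _ => ?_
  rw [bernoulliWeight_eq_pow_mul_pow, Fintype.card_fin]
  exact if_congr (spernerStat_indicator_eq_zero_iff ε) rfl rfl

end SpernerStat

section SpernerModule

variable {n : ℕ} {S : Finset (Finset (Fin n))} {hS : S.Nonempty} {hne : ∀ A ∈ S, A.Nonempty}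

/-- Union bound: a zero set missing `A` means `ε` is identically `true` on `A`. -/
lemma one_sub_spernerModule_le {t : ℝ} (ht : t ∈ Set.Icc (0 : ℝ) 1) :
    1 - spernerModule S hS hne t ≤ ∑ A ∈ S, (1 - t) ^ #A := by
  have hsplit := sum_filter_add_sum_filter_not univ
    (fun ε : Fin n → Bool => ∀ A ∈ S, ∃ i ∈ A, ε i = false) (bernoulliWeight t)
  rw [sum_bernoulliWeight] at hsplit
  rw [spernerModule_eq_sum_bernoulliWeight, ← eq_sub_of_add_eq' hsplit, sum_filter]
  calc _ ≤ ∑ ε, ∑ A ∈ S, if ∀ i ∈ A, ε i = true then bernoulliWeight t ε else 0 := by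
        refine sum_le_sum fun ε _ => ?_
        have hnonneg : ∀ A ∈ S, 0 ≤ if ∀ i ∈ A, ε i = true then bernoulliWeight t ε else 0 :=
          fun A _ => by split_ifs <;> simp [bernoulliWeight_nonneg ht]
        by_cases hε : ∀ A ∈ S, ∃ i ∈ A, ε i = false
        · rw [if_neg (not_not_intro hε)]
          exact sum_nonneg hnonneg
        · obtain ⟨A, hA, hAε⟩ : ∃ A ∈ S, ∀ i ∈ A, ε i = true := by simpa using hε
          rw [if_pos hε]
          exact (if_pos hAε).symm.trans_le (single_le_sum hnonneg hA)
    _ = ∑ A ∈ S, (1 - t) ^ #A := by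
        rw [sum_comm]
        refine sum_congr rfl fun A _ => ?_
        rw [← sum_filter]
        convert sum_bernoulliWeight_const_on t A true using 3
        exact (if_pos rfl).symm

/-- Near `t = 1` the union bound is of order `(1 - t) ^ 2` unless `S` has a singleton. -/
lemma exists_singleton_mem_of_spernerModule_eq_id
    (h : ∀ t ∈ Set.Icc (0 : ℝ) 1, spernerModule S hS hne t = t) : ∃ i, {i} ∈ S := by
  by_contra! hno
  have hcard : ∀ A ∈ S, 2 ≤ #A := fun A hA => by
    by_contra! hlt
    have hA1 : #A = 1 := by have := (hne A hA).card_pos; omega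
    obtain ⟨i, rfl⟩ := card_eq_one.1 hA1
    exact hno i hA
  have hS_pos : (0 : ℝ) < #S := by exact_mod_cast hS.card_pos
  set δ : ℝ := 1 / (2 * #S)
  have hδ : 0 < δ := by positivity
  have hδ_le : δ ≤ 1 := by
    rw [div_le_one (by positivity)]
    linarith [(Nat.one_le_cast (α := ℝ)).2 hS.card_pos]
  have hδ_mem : 1 - δ ∈ Set.Icc (0 : ℝ) 1 := ⟨by linarith, by linarith⟩
  have hbound := one_sub_spernerModule_le (hS := hS) (hne := hne) hδ_mem
  rw [h _ hδ_mem, sub_sub_cancel] at hbound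
  have hsum : ∑ A ∈ S, δ ^ #A ≤ #S * δ ^ 2 := by
    rw [← nsmul_eq_mul]
    exact sum_le_card_nsmul _ _ _ fun A hA => pow_le_pow_of_le_one hδ.le hδ_le (hcard A hA)
  have hval : (#S : ℝ) * δ ^ 2 = δ / 2 := by
    simp only [δ]
    field_simp
  linarith

/-- Every zero set meeting all members contains `i`; the zero set `Bᶜ` contains `i` but misses
`B`. -/
lemma spernerModule_lt_of_singleton_mem {i : Fin n} {B : Finset (Fin n)} (hi : {i} ∈ S)
    (hB : B ∈ S) (hiB : i ∉ B) {t : ℝ} (ht : t ∈ Set.Ioo (0 : ℝ) 1) :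
    spernerModule S hS hne t < t := by
  set εB : Fin n → Bool := fun j => decide (j ∈ B)
  have hεB : εB ∈ ({ε | ε i = false} : Finset (Fin n → Bool)) := by simp [εB, hiB]
  have hsub : ({ε | ∀ A ∈ S, ∃ j ∈ A, ε j = false} : Finset (Fin n → Bool)) ⊆
      ({ε | ε i = false} : Finset (Fin n → Bool)).erase εB := by
    intro ε hε
    simp only [mem_filter, mem_univ, true_and, mem_erase] at hε ⊢
    refine ⟨?_, ?_⟩
    · rintro rfl
      obtain ⟨j, hj, hjB⟩ := hε B hB
      simp [εB, hj] at hjB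
    · simpa using hε _ hi
  calc spernerModule S hS hne t
      ≤ ∑ ε ∈ ({ε | ε i = false} : Finset (Fin n → Bool)).erase εB,
          bernoulliWeight t ε := by
        rw [spernerModule_eq_sum_bernoulliWeight]
        exact sum_le_sum_of_subset_of_nonneg hsub fun ε _ _ =>
          bernoulliWeight_nonneg (Set.Ioo_subset_Icc_self ht) ε
    _ = t - bernoulliWeight t εB := by
        rw [sum_erase_eq_sub hεB, sum_bernoulliWeight_eq_false]
    _ < t := sub_lt_self _ (bernoulliWeight_pos ht εB)

end SpernerModule

lemma spernerModule_singleton {n : ℕ} (i : Fin n)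
    {hS : ({{i}} : Finset (Finset (Fin n))).Nonempty}
    {hne : ∀ A ∈ ({{i}} : Finset (Finset (Fin n))), A.Nonempty} (t : ℝ) :
    spernerModule {{i}} hS hne t = t := by
  rw [spernerModule_eq_sum_bernoulliWeight]
  simpa using sum_bernoulliWeight_eq_false t i

theorem sperner_module_identity_iff_projection_general
    (n : ℕ) (S : Finset (Finset (Fin n))) (hS : S.Nonempty)
    (hne : ∀ A ∈ S, A.Nonempty) (hsp : ∀ A ∈ S, ∀ B ∈ S, A ⊆ B → A = B) :
    (∀ t ∈ Set.Icc (0 : ℝ) 1, spernerModule S hS hne t = t) ↔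
      ∃ i : Fin n, S = {({i} : Finset (Fin n))} := by
  constructor
  · intro h
    obtain ⟨i, hi⟩ := exists_singleton_mem_of_spernerModule_eq_id h
    refine ⟨i, eq_singleton_iff_unique_mem.2 ⟨hi, fun B hB => ?_⟩⟩
    by_contra hBi
    have hiB : i ∉ B := fun hiB => hBi (hsp _ hi B hB (singleton_subset_iff.2 hiB)).symm
    have hhalf : (1 / 2 : ℝ) ∈ Set.Ioo (0 : ℝ) 1 := by norm_num
    exact (spernerModule_lt_of_singleton_mem hi hB hiB hhalf).ne
      (h _ (Set.Ioo_subset_Icc_self hhalf))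
  · rintro ⟨i, rfl⟩ t -
    exact spernerModule_singleton i t

/-- The module of a Sperner family is the identity on `[0,1]` if and only if the family
consists of exactly one singleton (in which case `H_S` is a coordinate projection). -/
theorem sperner_module_identity_iff_projection
    (n : ℕ) (hn : 1 ≤ n) (S : Finset (Finset (Fin n))) (hS : S.Nonempty)
    (hne : ∀ A ∈ S, A.Nonempty) (hsp : ∀ A ∈ S, ∀ B ∈ S, A ⊆ B → A = B) :
    (∀ t ∈ Set.Icc (0 : ℝ) 1, spernerModule S hS hne t = t) ↔
      ∃ i : Fin n, S = {({i} : Finset (Fin n))} :=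
  sperner_module_identity_iff_projection_general n S hS hne hsp
end

section
/- Let n be an integer with n ≥ 3 and, for 1 < r < n, let ω_{r:n} denote the unique fixed point in (0,1) of the module h_{r:n}. Then the fixed points are strictly increasing in r: ω_{r:n} < ω_{s:n} whenever 1 < r < s < n; and they satisfy the symmetry relation ω_{r:n} + ω_{n−r+1:n} = 1 for every 1 < r < n. -/
/-!
For `1 < r ≤ n` put `φ(t) = h_{r:n}(t) - t`. It vanishes at `0` and `1`, and
`φ' + 1 = h_{r:n}' = n C(n-1,r-1) t^{r-1} (1-t)^{n-r}` is strictly log-concave on `(0,1)`, so it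
takes the value `1` at most twice there. Two fixed points in `(0,1)` would give, by Rolle's theorem,
three zeros of `φ'`; hence the fixed point is unique. For `r < n` also `h_{r:n}'(1) = 0`, so `φ > 0`
just below `1`, and by the intermediate value theorem `φ < 0` on `(0,1)` only below `ω_{r:n}`.

Since `h_{s:n} < h_{r:n}` on `(0,1)` for `r < s`, we get `h_{s:n}(ω_{r:n}) < ω_{r:n}`, whence
`ω_{r:n} < ω_{s:n}`. Symmetry comes from `h_{n-r+1:n}(1-t) = 1 - h_{r:n}(t)`: the point
`1 - ω_{r:n}` is a fixed point of `h_{n-r+1:n}`.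
-/

/-- The module of the `r`-th order statistic of `n` variables:
`h_{r:n}(t) = Σ_{j=r}^n C(n,j) t^j (1−t)^{n−j}`. -/
noncomputable def orderModule (n r : ℕ) (t : ℝ) : ℝ :=
  ∑ j ∈ Finset.Icc r n, (n.choose j : ℝ) * t ^ j * (1 - t) ^ (n - j)

open Set Filter Topology Polynomial Real

lemma derivative_sum_bernsteinPolynomial_Icc (R : Type*) [CommRing R] (n r : ℕ) :
    derivative (∑ j ∈ Finset.Icc (r + 1) (n + 1), bernsteinPolynomial R (n + 1) j) =
      (n + 1) * bernsteinPolynomial R n r := by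
  rcases le_or_gt r n with hrn | hnr
  · have telescope := Finset.sum_Icc_sub hrn (bernsteinPolynomial R n)
    rw [bernsteinPolynomial.eq_zero_of_lt R n.lt_succ_self, zero_sub] at telescope
    rw [← Finset.map_add_right_Icc r n 1, Finset.sum_map, derivative_sum]
    simp only [addRightEmbedding_apply, bernsteinPolynomial.derivative_succ, Nat.cast_add,
      Nat.cast_one, add_tsub_cancel_right, ← Finset.mul_sum]
    rw [← neg_neg (bernsteinPolynomial R n r), ← telescope, ← Finset.sum_neg_distrib]
    simp_rw [neg_sub]
  · rw [Finset.Icc_eq_empty (by omega), bernsteinPolynomial.eq_zero_of_lt R hnr]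
    simp

lemma strictConcaveOn_mul_log_add_mul_log_one_sub {a b : ℝ} (ha : 0 < a) (hb : 0 ≤ b) :
    StrictConcaveOn ℝ (Ioo 0 1) fun t => a * log t + b * log (1 - t) := by
  refine ⟨convex_Ioo 0 1, fun x hx y hy hxy α β hα hβ hαβ => ?_⟩
  have hlog := strictConcaveOn_log_Ioi.2 hx.1 hy.1 hxy hα hβ hαβ
  have hlog_one_sub := strictConcaveOn_log_Ioi.concaveOn.2 (sub_pos.2 hx.2) (sub_pos.2 hy.2)
    hα.le hβ.le hαβ
  have hcombo : α • (1 - x) + β • (1 - y) = 1 - (α • x + β • y) := by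
    simp only [smul_eq_mul]; linear_combination hαβ
  rw [hcombo] at hlog_one_sub
  simp only [smul_eq_mul] at hlog hlog_one_sub ⊢
  linear_combination a * hlog + b * hlog_one_sub

lemma pow_mul_one_sub_pow_lt_of_eq {a b : ℕ} (ha : a ≠ 0) {x y z : ℝ} (hx : 0 < x)
    (hxy : x < y) (hyz : y < z) (hz : z < 1) (hxz : x ^ a * (1 - x) ^ b = z ^ a * (1 - z) ^ b) :
    x ^ a * (1 - x) ^ b < y ^ a * (1 - y) ^ b := by
  have hpos : ∀ t ∈ Ioo (0 : ℝ) 1, 0 < t ^ a * (1 - t) ^ b := fun t ht =>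
    mul_pos (pow_pos ht.1 a) (pow_pos (sub_pos.2 ht.2) b)
  have hlog : ∀ t ∈ Ioo (0 : ℝ) 1, log (t ^ a * (1 - t) ^ b) = a * log t + b * log (1 - t) :=
    fun t ht => by
      rw [log_mul (pow_ne_zero _ ht.1.ne') (pow_ne_zero _ (sub_pos.2 ht.2).ne'), log_pow, log_pow]
  have hx1 : x ∈ Ioo (0 : ℝ) 1 := ⟨hx, hxy.trans (hyz.trans hz)⟩
  have hy1 : y ∈ Ioo (0 : ℝ) 1 := ⟨hx.trans hxy, hyz.trans hz⟩
  have hz1 : z ∈ Ioo (0 : ℝ) 1 := ⟨hx.trans (hxy.trans hyz), hz⟩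
  have hconcave := (strictConcaveOn_mul_log_add_mul_log_one_sub
    (Nat.cast_pos.2 (Nat.pos_of_ne_zero ha)) b.cast_nonneg).lt_on_openSegment hx1 hz1
    (hxy.trans hyz).ne (Ioo_subset_openSegment ⟨hxy, hyz⟩)
  simp only [← hlog _ hx1, ← hlog _ hy1, ← hlog _ hz1, ← hxz, min_self] at hconcave
  exact (log_lt_log_iff (hpos x hx1) (hpos y hy1)).1 hconcave

lemma orderModule_eq_eval (n r : ℕ) (t : ℝ) :
    orderModule n r t = (∑ j ∈ Finset.Icc r n, bernsteinPolynomial ℝ n j).eval t := by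
  simp [orderModule, bernsteinPolynomial, eval_finsetSum]

lemma continuous_orderModule (n r : ℕ) : Continuous (orderModule n r) := by
  simpa only [funext (orderModule_eq_eval n r)] using Polynomial.continuous _

lemma hasDerivAt_orderModule (n r : ℕ) (t : ℝ) :
    HasDerivAt (orderModule (n + 1) (r + 1))
      ((n + 1) * n.choose r * (t ^ r * (1 - t) ^ (n - r))) t := by
  rw [funext (orderModule_eq_eval _ _)]
  refine (Polynomial.hasDerivAt _ t).congr_deriv ?_
  rw [derivative_sum_bernsteinPolynomial_Icc]
  simp [bernsteinPolynomial, mul_assoc]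

lemma orderModule_zero {n r : ℕ} (hr : r ≠ 0) : orderModule n r 0 = 0 := by
  simp only [orderModule_eq_eval, eval_finsetSum, bernsteinPolynomial.eval_at_0]
  exact Finset.sum_eq_zero fun j hj => if_neg (by grind)

lemma orderModule_one {n r : ℕ} (hr : r ≤ n) : orderModule n r 1 = 1 := by
  simp [orderModule_eq_eval, eval_finsetSum, bernsteinPolynomial.eval_at_1, hr]

lemma orderModule_one_sub {n r : ℕ} (hr : r ≤ n) (t : ℝ) :
    orderModule n (n - r + 1) (1 - t) = 1 - orderModule n r t := by
  have hflip : ∀ j ∈ Finset.Ico (n - r + 1) (n + 1),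
      (bernsteinPolynomial ℝ n j).eval (1 - t) = (bernsteinPolynomial ℝ n (n - j)).eval t := by
    intro j hj
    rw [← bernsteinPolynomial.flip ℝ n j (by grind), eval_comp]
    simp
  have htotal := congrArg (eval t) (bernsteinPolynomial.sum ℝ n)
  rw [← Finset.sum_range_add_sum_Ico _ (show r ≤ n + 1 by omega), eval_add, eval_one] at htotal
  rw [orderModule_eq_eval, orderModule_eq_eval, ← Finset.Ico_add_one_right_eq_Icc,
    ← Finset.Ico_add_one_right_eq_Icc, eval_finsetSum, Finset.sum_congr rfl hflip,
    Finset.sum_Ico_reflect (fun k => (bernsteinPolynomial ℝ n k).eval t) _ le_rfl,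
    Nat.sub_self, show n + 1 - (n - r + 1) = r by omega, Nat.Ico_zero_eq_range, ← htotal,
    eval_finsetSum]
  ring

lemma orderModule_lt_orderModule {n r s : ℕ} (hrs : r < s) (hrn : r ≤ n) {t : ℝ}
    (ht : t ∈ Ioo 0 1) : orderModule n s t < orderModule n r t := by
  have ht0 := ht.1
  have ht1 := sub_pos.2 ht.2
  have hchoose : 0 < (n.choose r : ℝ) := Nat.cast_pos.2 (Nat.choose_pos hrn)
  exact Finset.sum_lt_sum_of_subset (Finset.Icc_subset_Icc_left hrs.le) (i := r)
    (by simp [hrn]) (by simp [hrs]) (by positivity) fun j _ _ => by positivity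

lemma eq_of_orderModule_eq_self {n r : ℕ} (hr : 1 < r) (hrn : r ≤ n) {v w : ℝ}
    (hv : v ∈ Ioo 0 1) (hw : w ∈ Ioo 0 1)
    (hfv : orderModule n r v = v) (hfw : orderModule n r w = w) : v = w := by
  wlog hvw : v < w generalizing v w
  · rcases (not_lt.1 hvw).lt_or_eq with h | h
    exacts [(this hw hv hfw hfv h).symm, h.symm]
  obtain ⟨n, rfl⟩ : ∃ m, n = m + 1 := ⟨n - 1, by omega⟩
  obtain ⟨r, rfl⟩ : ∃ k, r = k + 1 := ⟨r - 1, by omega⟩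
  set c : ℝ := (n + 1) * n.choose r
  have hc : 0 < c := by have := Nat.choose_pos (by omega : r ≤ n); positivity
  have rolle : ∀ a b, a < b →
      orderModule (n + 1) (r + 1) a - a = orderModule (n + 1) (r + 1) b - b →
      ∃ x ∈ Ioo a b, c * (x ^ r * (1 - x) ^ (n - r)) = 1 := by
    intro a b hab hφab
    obtain ⟨x, hx, hφ'x⟩ := exists_hasDerivAt_eq_zero hab
      ((continuous_orderModule _ _).sub continuous_id).continuousOn hφab
      fun x _ => (hasDerivAt_orderModule n r x).sub (hasDerivAt_id x)
    exact ⟨x, hx, sub_eq_zero.1 hφ'x⟩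
  obtain ⟨x, hx, hψx⟩ := rolle 0 v hv.1 (by simp [orderModule_zero, hfv])
  obtain ⟨y, hy, hψy⟩ := rolle v w hvw (by simp [hfv, hfw])
  obtain ⟨z, hz, hψz⟩ := rolle w 1 hw.2 (by simp [hfw, orderModule_one (by omega : r + 1 ≤ n + 1)])
  have hlt := pow_mul_one_sub_pow_lt_of_eq (b := n - r) (by omega : r ≠ 0) hx.1
    (hx.2.trans hy.1) (hy.2.trans hz.1) hz.2 (mul_left_cancel₀ hc.ne' (hψx.trans hψz.symm))
  have := mul_lt_mul_of_pos_left hlt hc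
  rw [hψx, hψy] at this
  exact (lt_irrefl 1 this).elim

lemma eventually_lt_orderModule {n r : ℕ} (hr : r ≠ 0) (hrn : r < n) :
    ∀ᶠ t in 𝓝[<] 1, t < orderModule n r t := by
  obtain ⟨n, rfl⟩ : ∃ m, n = m + 1 := ⟨n - 1, by omega⟩
  obtain ⟨r, rfl⟩ : ∃ k, r = k + 1 := ⟨r - 1, by omega⟩
  have hderiv : HasDerivAt (fun t => orderModule (n + 1) (r + 1) t - t) (-1) 1 := by
    refine ((hasDerivAt_orderModule n r 1).sub (hasDerivAt_id' 1)).congr_deriv ?_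
    simp [zero_pow (by omega : n - r ≠ 0)]
  have hsign := eventually_nhdsWithin_sign_eq_of_deriv_neg (hderiv.deriv ▸ neg_one_lt_zero)
    (by simp [orderModule_one (by omega : r + 1 ≤ n + 1)])
  filter_upwards [nhdsWithin_le_nhds hsign, self_mem_nhdsWithin] with t ht (ht1 : t < 1)
  rwa [sign_pos (sub_pos.2 ht1), sign_eq_one_iff, sub_pos] at ht

lemma lt_of_orderModule_lt_self {n r : ℕ} (hr : 1 < r) (hrn : r < n) {w t : ℝ}
    (hw : w ∈ Ioo 0 1) (hfw : orderModule n r w = w) (ht : t ∈ Ioo 0 1)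
    (hlt : orderModule n r t < t) : t < w := by
  by_contra! hwt
  obtain ⟨u, hu, htu, hu1⟩ :=
    ((eventually_lt_orderModule (by omega) hrn).and (Ioo_mem_nhdsLT ht.2)).exists
  obtain ⟨y, hy, hfy⟩ := intermediate_value_Ioo htu.le
    ((continuous_orderModule n r).sub continuous_id).continuousOn
    (show (0 : ℝ) ∈ Ioo _ _ from ⟨sub_neg.2 hlt, sub_pos.2 hu⟩)
  have hwy := eq_of_orderModule_eq_self hr hrn.le hw ⟨ht.1.trans hy.1, hy.2.trans hu1⟩ hfw
    (sub_eq_zero.1 hfy)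
  linarith [hy.1]

theorem orderModule_fixed_points_increasing_and_symmetric_general
    (n : ℕ) (ω : ℕ → ℝ)
    (hω : ∀ r : ℕ, 1 < r → r < n →
      ω r ∈ Set.Ioo (0 : ℝ) 1 ∧ orderModule n r (ω r) = ω r) :
    (∀ r s : ℕ, 1 < r → r < s → s < n → ω r < ω s) ∧
    (∀ r : ℕ, 1 < r → r < n → ω r + ω (n - r + 1) = 1) := by
  refine ⟨fun r s hr hrs hsn => ?_, fun r hr hrn => ?_⟩
  · obtain ⟨hrI, hrF⟩ := hω r hr (hrs.trans hsn)
    obtain ⟨hsI, hsF⟩ := hω s (hr.trans hrs) hsn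
    refine lt_of_orderModule_lt_self (hr.trans hrs) hsn hsI hsF hrI ?_
    calc orderModule n s (ω r) < orderModule n r (ω r) :=
          orderModule_lt_orderModule hrs (hrs.trans hsn).le hrI
      _ = ω r := hrF
  · obtain ⟨hrI, hrF⟩ := hω r hr hrn
    obtain ⟨hI, hF⟩ := hω (n - r + 1) (by omega) (by omega)
    have hreflect : 1 - ω r = ω (n - r + 1) :=
      eq_of_orderModule_eq_self (n := n) (by omega) (by omega) ⟨by linarith [hrI.2], by linarith [hrI.1]⟩
        hI (by rw [orderModule_one_sub (by omega), hrF]) hF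
    linarith

/-- The fixed points `ω_{r:n} ∈ (0,1)` of the modules of order statistics are strictly
increasing in `r` and satisfy `ω_{r:n} + ω_{n−r+1:n} = 1`. -/
theorem orderModule_fixed_points_increasing_and_symmetric
    (n : ℕ) (hn : 3 ≤ n) (ω : ℕ → ℝ)
    (hω : ∀ r : ℕ, 1 < r → r < n →
      ω r ∈ Set.Ioo (0 : ℝ) 1 ∧ orderModule n r (ω r) = ω r) :
    (∀ r s : ℕ, 1 < r → r < s → s < n → ω r < ω s) ∧
    (∀ r : ℕ, 1 < r → r < n → ω r + ω (n - r + 1) = 1) :=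
  orderModule_fixed_points_increasing_and_symmetric_general n ω hω
end
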